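/- A function M on counting vectors is an effective co-number function if and only if M[P] = Σᵢ m(pᵢ) where m : [0,∞) → ℝ is convex, continuous, m(0) = 1, and m(p) = 0 for all p ≥ 1. Moreover this generating function m is unique. -/

import Mathlib

/-- A counting vector of dimension `N`: nonnegative entries summing to `N`. -/
def IsCountingVector {N : ℕ} (P : Fin N → ℝ) : Prop :=
  (∀ i, 0 ≤ P i) ∧ ∑ i, P i = N

/-- An effective co-number function (co-ENF): additive under concatenation,
symmetric, continuous on each `W_N`, monotone under cumulation (M⁺), and with
boundary values `M(N,0,...,0) = N − 1`. -/
def IsCoENF (M : ∀ N : ℕ, (Fin N → ℝ) → ℝ) : Prop :=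
  -- (A) additivity
  (∀ (N K : ℕ) (P : Fin N → ℝ) (Q : Fin K → ℝ),
    IsCountingVector P → IsCountingVector Q →
    M (N + K) (Fin.append P Q) = M N P + M K Q) ∧
  -- (S) symmetry
  (∀ (N : ℕ) (P : Fin N → ℝ), IsCountingVector P →
    ∀ σ : Equiv.Perm (Fin N), M N (P ∘ σ) = M N P) ∧
  -- (C) continuity on each W_N
  (∀ N : ℕ, ContinuousOn (M N) {P : Fin N → ℝ | IsCountingVector P}) ∧
  -- (M⁺) cumulation monotonicity
  (∀ (N : ℕ) (P : Fin N → ℝ), IsCountingVector P →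
    ∀ i j : Fin N, i ≠ j → P i ≤ P j →
    ∀ ε : ℝ, 0 < ε → ε ≤ P i → ε ≤ N - P j →
      M N P ≤ M N (Function.update (Function.update P i (P i - ε)) j (P j + ε))) ∧
  -- (co-B2) boundary values
  (∀ N : ℕ, M (N + 1) (fun k => if k = 0 then ((N + 1 : ℕ) : ℝ) else 0) = N)

/-- The canonical generating-function properties: convex, continuous,
`m(0) = 1`, and `m ≡ 0` on `[1,∞)`. -/
def IsCanonicalGF (m : ℝ → ℝ) : Prop :=
  ConvexOn ℝ (Set.Ici 0) m ∧ ContinuousOn m (Set.Ici 0) ∧ m 0 = 1 ∧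
    ∀ p : ℝ, 1 ≤ p → m p = 0

/-!
By symmetry `M` is a function of the multiset of entries. The key fact is that `M` does not change
when mass moves between two entries that stay `≥ 1`: spreading `{a, b}` to `{a + b - 1, 1}` is an
(M⁺) move, and the reverse move is realised by adding two reservoirs `{K + 1, 0, …, 0}` (worth `K`
each by (co-B2)), pouring into the first one and draining the second one down to the required
value. Hence `M` only sees the entries below `1` and the number of entries. Appending one entry `1`
per entry costs nothing, and redistributing the entries `≥ 1` then splits `P` into the pairs
`{min pᵢ 1, 2 - min pᵢ 1}`, so `M[P] = ∑ m(pᵢ)` with `m(p) = M(min p 1, 2 - min p 1)`.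
(M⁺) makes `m` midpoint convex on `[0, 1]` and (C) makes it continuous, hence convex.
-/

open Finset

theorem Tuple.exists_perm_eq_comp_of_perm_ofFn {α : Type*} [LinearOrder α] {n : ℕ}
    {f g : Fin n → α}
    (h : (List.ofFn f).Perm (List.ofFn g)) : ∃ σ : Equiv.Perm (Fin n), g = f ∘ σ := by
  have hsort : f ∘ Tuple.sort f = g ∘ Tuple.sort g :=
    List.ofFn_injective <|
      (((Tuple.sort f).ofFn_comp_perm f).trans
        (h.trans ((Tuple.sort g).ofFn_comp_perm g).symm)).eq_of_sortedLE
        (Tuple.monotone_sort f).sortedLE_ofFn (Tuple.monotone_sort g).sortedLE_ofFn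
  refine ⟨(Tuple.sort g).symm.trans (Tuple.sort f), funext fun k => ?_⟩
  simpa using (congrFun hsort ((Tuple.sort g).symm k)).symm

theorem Multiset.map_univ_toList_get {α : Type*} (s : Multiset α) : univ.val.map s.toList.get = s := by
  rw [Fin.univ_val_map, List.ofFn_get, Multiset.coe_toList]

theorem Multiset.map_univ_cons_cons {α : Type*} {n : ℕ} (a b : α) (Q : Fin n → α) :
    univ.val.map (Fin.cons a (Fin.cons b Q) : Fin (n + 2) → α) =
      a ::ₘ b ::ₘ univ.val.map Q := by
  simp only [Fin.univ_val_map, List.ofFn_succ, Fin.cons_zero, Fin.cons_succ, Multiset.cons_coe]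

theorem Multiset.add_replicate_card_eq {α : Type*} [LinearOrder α] (s : Multiset α) (a : α) :
    s + Multiset.replicate (Multiset.card s) a = s.map (max · a) + s.map (min · a) := by
  induction s using Multiset.induction_on with
  | empty => simp
  | cons x s ih =>
    rw [Multiset.card_cons, Multiset.replicate_succ, Multiset.map_cons, Multiset.map_cons,
      Multiset.cons_add, Multiset.add_cons, ih, Multiset.cons_add, Multiset.add_cons]
    rcases le_total x a with h | h
    · rw [max_eq_right h, min_eq_left h, Multiset.cons_swap]
    · rw [max_eq_left h, min_eq_right h]

theorem Multiset.sum_map_pair {α β : Type*} (s : Multiset α) (f g : α → β) :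
    (s.map fun x => ({f x, g x} : Multiset β)).sum = s.map f + s.map g := by
  induction s using Multiset.induction_on with
  | empty => simp
  | cons x s ih =>
    rw [Multiset.map_cons, Multiset.sum_cons, ih, Multiset.map_cons, Multiset.map_cons,
      Multiset.insert_eq_cons, Multiset.cons_add, Multiset.singleton_add, Multiset.add_cons,
      Multiset.cons_add, Multiset.cons_swap (g x)]

theorem Fin.sum_comp_update_update {α β : Type*} [AddCommGroup β] {N : ℕ} (f : α → β)
    (g : Fin N → α) {i j : Fin N} (hij : i ≠ j) (a b : α) :
    ∑ k, f (Function.update (Function.update g i a) j b k) =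
      ∑ k, f (g k) + (f a - f (g i)) + (f b - f (g j)) := by
  have hsum : ∀ (h : Fin N → β) l c,
      ∑ k, Function.update h l c k = ∑ k, h k + (c - h l) := fun h l c => by
    rw [Finset.sum_update_of_mem (Finset.mem_univ l), Finset.sdiff_singleton_eq_erase,
      ← Finset.add_sum_erase univ h (Finset.mem_univ l)]
    abel
  simp only [← Function.comp_apply (f := f), Function.comp_update]
  rw [hsum, hsum, Function.update_of_ne hij.symm]

theorem ConvexOn.add_le_add_of_spread {f : ℝ → ℝ} {s : Set ℝ} (hf : ConvexOn ℝ s f)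
    {x y ε : ℝ} (hu : x - ε ∈ s) (hv : y + ε ∈ s) (hxy : x ≤ y) (hε : 0 < ε) :
    f x + f y ≤ f (x - ε) + f (y + ε) := by
  have hx : x ∈ s := hf.1.ordConnected.out hu hv ⟨by linarith, by linarith⟩
  have hy : y ∈ s := hf.1.ordConnected.out hu hv ⟨by linarith, by linarith⟩
  have h₁ := hf.secant_mono hu hx hv (by linarith) (by linarith) (by linarith)
  have h₂ := hf.secant_mono hv hu hy (by linarith) (by linarith) (by linarith)
  rw [show x - (x - ε) = ε by ring] at h₁
  rw [show y - (y + ε) = -ε by ring, div_neg, ← neg_div, neg_sub,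
    ← neg_div_neg_eq, neg_sub, neg_sub] at h₂
  have := h₁.trans h₂
  rw [div_le_div_iff_of_pos_right hε] at this
  linarith

theorem nonpos_of_continuousOn_of_midpoint {g : ℝ → ℝ} {a b : ℝ}
    (hg : ContinuousOn g (Set.Icc a b))
    (hmid : ∀ x ∈ Set.Icc a b, ∀ y ∈ Set.Icc a b, g ((x + y) / 2) ≤ (g x + g y) / 2)
    (ha : g a ≤ 0) (hb : g b ≤ 0) : ∀ t ∈ Set.Icc a b, g t ≤ 0 := by
  intro t ht
  by_contra! hpos
  obtain ⟨c, hc, hmax⟩ := isCompact_Icc.exists_isMaxOn ⟨t, ht⟩ hg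
  have hgc : 0 < g c := hpos.trans_le (hmax ht)
  -- The leftmost maximiser `t₀` is interior, and `g (t₀ - h) < g t₀` contradicts
  -- midpoint convexity at `t₀ - h`, `t₀ + h`.
  set T := Set.Icc a b ∩ g ⁻¹' {g c}
  have hTbdd : BddBelow T := ⟨a, fun u hu => hu.1.1⟩
  obtain ⟨ht₀, hgt₀⟩ : sInf T ∈ T :=
    (hg.preimage_isClosed_of_isClosed isClosed_Icc isClosed_singleton).csInf_mem ⟨c, hc, rfl⟩
      hTbdd
  set t₀ := sInf T
  rw [Set.mem_preimage, Set.mem_singleton_iff] at hgt₀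
  have hat₀ : a < t₀ := ht₀.1.lt_of_ne fun h => by rw [← h] at hgt₀; linarith
  have ht₀b : t₀ < b := ht₀.2.lt_of_ne fun h => by rw [h] at hgt₀; linarith
  set h := min (t₀ - a) (b - t₀)
  have hh : 0 < h := lt_min (by linarith) (by linarith)
  have hl : t₀ - h ∈ Set.Icc a b :=
    ⟨by linarith [min_le_left (t₀ - a) (b - t₀)], by linarith⟩
  have hr : t₀ + h ∈ Set.Icc a b :=
    ⟨by linarith, by linarith [min_le_right (t₀ - a) (b - t₀)]⟩
  have hlt : g (t₀ - h) < g c := (hmax hl).lt_of_ne fun heq => by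
    linarith [csInf_le hTbdd (show t₀ - h ∈ T from ⟨hl, heq⟩)]
  have hgr : g (t₀ + h) ≤ g c := hmax hr
  have := hmid _ hl _ hr
  rw [show (t₀ - h + (t₀ + h)) / 2 = t₀ by ring] at this
  linarith

theorem convexOn_of_continuousOn_of_midpoint {f : ℝ → ℝ} {a b : ℝ}
    (hf : ContinuousOn f (Set.Icc a b))
    (hmid : ∀ x ∈ Set.Icc a b, ∀ y ∈ Set.Icc a b, f ((x + y) / 2) ≤ (f x + f y) / 2) :
    ConvexOn ℝ (Set.Icc a b) f := by
  refine LinearOrder.convexOn_of_lt (convex_Icc a b) fun x hx y hy hxy μ ν hμ hν hμν => ?_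
  set k := (f y - f x) / (y - x)
  have hk : k * (y - x) = f y - f x := div_mul_cancel₀ _ (by linarith)
  have hsub : Set.Icc x y ⊆ Set.Icc a b := Set.Icc_subset_Icc hx.1 hy.2
  have hz : μ • x + ν • y = x + ν * (y - x) := by
    rw [smul_eq_mul, smul_eq_mul, show μ = 1 - ν by linarith]; ring
  have key := nonpos_of_continuousOn_of_midpoint (g := fun u => f u - (f x + k * (u - x)))
    ((hf.mono hsub).sub (by fun_prop))
    (fun u hu v hv => by
      have := hmid u (hsub hu) v (hsub hv)
      have hline : k * ((u + v) / 2 - x) = (k * (u - x) + k * (v - x)) / 2 := by ring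
      linarith)
    (by simp) (by linarith) (μ • x + ν • y)
    ⟨by rw [hz]; nlinarith, by rw [hz]; nlinarith⟩
  rw [hz] at key ⊢
  rw [smul_eq_mul, smul_eq_mul, show μ = 1 - ν by linarith]
  have hline : k * (x + ν * (y - x) - x) = ν * (f y - f x) := by rw [← hk]; ring
  linarith

theorem IsCountingVector.append {N K : ℕ} {P : Fin N → ℝ} {Q : Fin K → ℝ}
    (hP : IsCountingVector P) (hQ : IsCountingVector Q) : IsCountingVector (Fin.append P Q) :=
  ⟨Fin.addCases (by simpa using hP.1) (by simpa using hQ.1), by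
    rw [Fin.sum_univ_add]; simp [hP.2, hQ.2]⟩

theorem IsCountingVector.comp_perm {N : ℕ} {P : Fin N → ℝ} (hP : IsCountingVector P)
    (σ : Equiv.Perm (Fin N)) : IsCountingVector (P ∘ σ) :=
  ⟨fun i => hP.1 (σ i), by rw [← hP.2]; exact Equiv.sum_comp σ P⟩

theorem IsCountingVector.update_update {N : ℕ} {P : Fin N → ℝ} (hP : IsCountingVector P)
    {i j : Fin N} (hij : i ≠ j) {a b : ℝ} (ha : 0 ≤ a) (hb : 0 ≤ b)
    (hab : a + b = P i + P j) :
    IsCountingVector (Function.update (Function.update P i a) j b) := by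
  have hsum := Fin.sum_comp_update_update id P hij a b
  simp only [id] at hsum
  refine ⟨fun k => ?_, by rw [hsum, hP.2]; linarith⟩
  rcases eq_or_ne k j with rfl | hkj
  · simpa using hb
  rcases eq_or_ne k i with rfl | hki
  · simpa [Function.update_of_ne hkj] using ha
  · simpa [Function.update_of_ne hkj, Function.update_of_ne hki] using hP.1 k

theorem isCountingVector_pile (n : ℕ) :
    IsCountingVector fun k : Fin (n + 1) => if k = 0 then ((n + 1 : ℕ) : ℝ) else 0 :=
  ⟨fun k => by dsimp only; split <;> positivity, by simp⟩

theorem isCountingVector_pair {p : ℝ} (h0 : 0 ≤ p) (h2 : p ≤ 2) :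
    IsCountingVector ![p, 2 - p] :=
  ⟨Fin.forall_fin_two.2 ⟨h0, by simpa using h2⟩, by simp [Fin.sum_univ_two]⟩

theorem isCoENF_of_eq_sum {M : ∀ N : ℕ, (Fin N → ℝ) → ℝ} {m : ℝ → ℝ}
    (hm : IsCanonicalGF m)
    (hM : ∀ (N : ℕ) (P : Fin N → ℝ), IsCountingVector P → M N P = ∑ i, m (P i)) :
    IsCoENF M := by
  obtain ⟨hconv, hcont, hm0, hm1⟩ := hm
  refine ⟨fun N K P Q hP hQ => ?_, fun N P hP σ => ?_, fun N => ?_,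
    fun N P hP i j hij hle ε hε hεi _ => ?_, fun N => ?_⟩
  · rw [hM _ _ (hP.append hQ), hM _ _ hP, hM _ _ hQ, Fin.sum_univ_add]
    simp
  · rw [hM _ _ (hP.comp_perm σ), hM _ _ hP]
    exact Equiv.sum_comp σ (fun i => m (P i))
  · refine (continuousOn_finsetSum _ fun i _ => ?_).congr fun P hP => hM N P hP
    exact hcont.comp (continuous_apply i).continuousOn fun P hP => hP.1 i
  · have hPj := hP.1 j
    rw [hM _ _ hP, hM _ _ (hP.update_update hij (by linarith) (by linarith) (by ring)),
      Fin.sum_comp_update_update m P hij]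
    have := hconv.add_le_add_of_spread (x := P i) (y := P j)
      (by simp only [Set.mem_Ici]; linarith) (by simp only [Set.mem_Ici]; linarith) hle hε
    linarith
  · have hpile : m ((N : ℝ) + 1) = 0 := hm1 _ (by simp)
    rw [hM _ _ (isCountingVector_pile N), Fin.sum_univ_succ]
    simp [hpile, hm0]

theorem IsCanonicalGF.eqOn_of_sum_eq {m₁ m₂ : ℝ → ℝ} (h₁ : IsCanonicalGF m₁)
    (h₂ : IsCanonicalGF m₂)
    (h : ∀ (N : ℕ) (P : Fin N → ℝ), IsCountingVector P →
      ∑ i, m₁ (P i) = ∑ i, m₂ (P i)) :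
    Set.EqOn m₁ m₂ (Set.Ici 0) := by
  intro p hp
  rcases le_total 1 p with hp1 | hp1
  · rw [h₁.2.2.2 p hp1, h₂.2.2.2 p hp1]
  · have := h 2 _ (isCountingVector_pair hp (by linarith))
    simpa [Fin.sum_univ_two, h₁.2.2.2 (2 - p) (by linarith), h₂.2.2.2 (2 - p) (by linarith)]
      using this

def IsCountingMultiset (s : Multiset ℝ) : Prop :=
  (∀ x ∈ s, 0 ≤ x) ∧ s.sum = Multiset.card s

theorem isCountingMultiset_map_univ {N : ℕ} {P : Fin N → ℝ} :
    IsCountingMultiset (univ.val.map P) ↔ IsCountingVector P := by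
  simp [IsCountingMultiset, IsCountingVector, Finset.sum_eq_multiset_sum]

theorem IsCountingMultiset.toList_get {s : Multiset ℝ} (hs : IsCountingMultiset s) :
    IsCountingVector s.toList.get :=
  isCountingMultiset_map_univ.1 (by rwa [Multiset.map_univ_toList_get])

theorem IsCountingMultiset.add {s t : Multiset ℝ} (hs : IsCountingMultiset s)
    (ht : IsCountingMultiset t) : IsCountingMultiset (s + t) := by
  refine ⟨fun x hx => ?_, by simp [hs.2, ht.2]⟩
  rcases Multiset.mem_add.1 hx with hx | hx
  exacts [hs.1 x hx, ht.1 x hx]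

theorem IsCountingMultiset.cons_cons {x y x' y' : ℝ} {s : Multiset ℝ}
    (hs : IsCountingMultiset (x ::ₘ y ::ₘ s)) (hx' : 0 ≤ x') (hy' : 0 ≤ y')
    (h : x' + y' = x + y) : IsCountingMultiset (x' ::ₘ y' ::ₘ s) := by
  refine ⟨fun z hz => ?_, ?_⟩
  · rcases Multiset.mem_cons.1 hz with rfl | hz
    · exact hx'
    rcases Multiset.mem_cons.1 hz with rfl | hz
    exacts [hy', hs.1 z (by simp [hz])]
  · have := hs.2
    simp only [Multiset.sum_cons, Multiset.card_cons] at this ⊢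
    linarith

theorem IsCountingMultiset.add_le_card {x y : ℝ} {s : Multiset ℝ}
    (hs : IsCountingMultiset (x ::ₘ y ::ₘ s)) : x + y ≤ Multiset.card s + 2 := by
  have h := hs.2
  have := Multiset.sum_nonneg fun z hz =>
    hs.1 z (Multiset.mem_cons_of_mem (Multiset.mem_cons_of_mem hz))
  simp only [Multiset.sum_cons, Multiset.card_cons] at h
  push_cast at h
  linarith

theorem isCountingMultiset_zero : IsCountingMultiset 0 := by
  simp [IsCountingMultiset]

theorem isCountingMultiset_replicate_one (n : ℕ) :
    IsCountingMultiset (Multiset.replicate n 1) :=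
  ⟨fun x hx => by rw [Multiset.eq_of_mem_replicate hx]; exact zero_le_one, by simp⟩

theorem isCountingMultiset_pair {y : ℝ} (h0 : 0 ≤ y) (h2 : y ≤ 2) :
    IsCountingMultiset {y, 2 - y} := by
  refine ⟨fun x hx => ?_, by norm_num⟩
  rcases Multiset.mem_cons.1 hx with rfl | hx
  · exact h0
  · rw [Multiset.mem_singleton.1 hx]; linarith

theorem isCountingMultiset_sum {ts : Multiset (Multiset ℝ)}
    (h : ∀ t ∈ ts, IsCountingMultiset t) : IsCountingMultiset ts.sum := by
  induction ts using Multiset.induction_on with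
  | empty => exact isCountingMultiset_zero
  | cons t ts ih =>
    rw [Multiset.sum_cons]
    exact (h t (Multiset.mem_cons_self t ts)).add
      (ih fun u hu => h u (Multiset.mem_cons_of_mem hu))

def pile (n : ℕ) : Multiset ℝ :=
  ((n : ℝ) + 1) ::ₘ Multiset.replicate n 0

theorem map_univ_pile (n : ℕ) :
    univ.val.map (fun k : Fin (n + 1) => if k = 0 then ((n + 1 : ℕ) : ℝ) else 0) = pile n := by
  simp [pile, Fin.univ_val_map, List.ofFn_succ, Fin.succ_ne_zero, ← Multiset.cons_coe,
    Multiset.coe_replicate]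

theorem isCountingMultiset_pile (n : ℕ) : IsCountingMultiset (pile n) := by
  rw [← map_univ_pile]
  exact isCountingMultiset_map_univ.2 (isCountingVector_pile n)

/-- `M` evaluated at one listing of `s`; by (S) the listing is irrelevant when `s` is counting. -/
noncomputable def onMultiset (M : ∀ N : ℕ, (Fin N → ℝ) → ℝ) (s : Multiset ℝ) : ℝ :=
  M s.toList.length s.toList.get

noncomputable def pairFun (M : ∀ N : ℕ, (Fin N → ℝ) → ℝ) (x : ℝ) : ℝ :=
  onMultiset M {x, 2 - x}

noncomputable def genFun (M : ∀ N : ℕ, (Fin N → ℝ) → ℝ) (x : ℝ) : ℝ :=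
  pairFun M (min x 1)

namespace IsCoENF

variable {M : ∀ N : ℕ, (Fin N → ℝ) → ℝ} (hM : IsCoENF M)
include hM

theorem eq_of_map_univ_eq {n n' : ℕ} {P : Fin n → ℝ} {Q : Fin n' → ℝ}
    (hP : IsCountingVector P) (h : univ.val.map P = univ.val.map Q) : M n P = M n' Q := by
  rw [Fin.univ_val_map, Fin.univ_val_map, Multiset.coe_eq_coe] at h
  obtain rfl : n = n' := by simpa using h.length_eq
  obtain ⟨σ, rfl⟩ := Tuple.exists_perm_eq_comp_of_perm_ofFn h
  exact (hM.2.1 n P hP σ).symm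

theorem onMultiset_map_univ {N : ℕ} {P : Fin N → ℝ} (hP : IsCountingVector P) :
    onMultiset M (univ.val.map P) = M N P :=
  (hM.eq_of_map_univ_eq hP (by rw [Multiset.map_univ_toList_get])).symm

theorem onMultiset_add {s t : Multiset ℝ} (hs : IsCountingMultiset s)
    (ht : IsCountingMultiset t) : onMultiset M (s + t) = onMultiset M s + onMultiset M t := by
  have happ : univ.val.map (Fin.append s.toList.get t.toList.get) = s + t := by
    rw [Fin.univ_val_map, List.ofFn_fin_append, List.ofFn_get, List.ofFn_get,
      ← Multiset.coe_add, Multiset.coe_toList, Multiset.coe_toList]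
  rw [← happ, hM.onMultiset_map_univ (hs.toList_get.append ht.toList_get)]
  exact hM.1 _ _ _ _ hs.toList_get ht.toList_get

theorem onMultiset_le_move {x y ε : ℝ} {s : Multiset ℝ}
    (hs : IsCountingMultiset (x ::ₘ y ::ₘ s)) (hxy : x ≤ y) (hε : 0 ≤ ε)
    (hεx : ε ≤ x) :
    onMultiset M (x ::ₘ y ::ₘ s) ≤ onMultiset M ((x - ε) ::ₘ (y + ε) ::ₘ s) := by
  rcases hε.eq_or_lt with rfl | hε
  · simp
  set P : ℝ → ℝ → Fin (s.toList.length + 2) → ℝ :=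
    fun a b => Fin.cons a (Fin.cons b s.toList.get)
  have hmap : ∀ a b, univ.val.map (P a b) = a ::ₘ b ::ₘ s := fun a b => by
    rw [Multiset.map_univ_cons_cons, Multiset.map_univ_toList_get]
  have hP : IsCountingVector (P x y) := isCountingMultiset_map_univ.1 (by rwa [hmap])
  have hP' : IsCountingVector (P (x - ε) (y + ε)) := isCountingMultiset_map_univ.1 (by
    rw [hmap]; exact hs.cons_cons (by linarith) (by linarith [hs.1 y (by simp)]) (by ring))
  have hupd : Function.update (Function.update (P x y) 0 (x - ε)) 1 (y + ε) =
      P (x - ε) (y + ε) := by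
    rw [Fin.update_cons_zero, show (1 : Fin (s.toList.length + 2)) = Fin.succ 0 from rfl,
      ← Fin.cons_update, Fin.update_cons_zero]
  rw [← hmap, ← hmap, hM.onMultiset_map_univ hP, hM.onMultiset_map_univ hP', ← hupd]
  refine hM.2.2.2.1 _ _ hP 0 1 (by simp) hxy ε hε hεx ?_
  have := hs.add_le_card
  simp only [P, Fin.cons_zero, Fin.cons_one, Multiset.length_toList]
  push_cast
  linarith

theorem onMultiset_pile (n : ℕ) : onMultiset M (pile n) = n := by
  rw [← map_univ_pile, hM.onMultiset_map_univ (isCountingVector_pile n)]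
  exact hM.2.2.2.2 n

theorem onMultiset_zero : onMultiset M 0 = 0 := by
  have := hM.onMultiset_add isCountingMultiset_zero isCountingMultiset_zero
  rw [add_zero] at this
  linarith

theorem onMultiset_replicate_one (n : ℕ) : onMultiset M (Multiset.replicate n 1) = 0 := by
  induction n with
  | zero => exact hM.onMultiset_zero
  | succ n ih =>
    have h1 : onMultiset M (Multiset.replicate 1 1) = 0 := by
      simpa [pile] using hM.onMultiset_pile 0
    rw [Multiset.replicate_succ, ← Multiset.singleton_add, ← Multiset.replicate_one,
      hM.onMultiset_add (isCountingMultiset_replicate_one 1) (isCountingMultiset_replicate_one n),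
      h1, ih, add_zero]

theorem onMultiset_sum {ts : Multiset (Multiset ℝ)} (h : ∀ t ∈ ts, IsCountingMultiset t) :
    onMultiset M ts.sum = (ts.map (onMultiset M)).sum := by
  induction ts using Multiset.induction_on with
  | empty => exact hM.onMultiset_zero
  | cons t ts ih =>
    have hts : ∀ u ∈ ts, IsCountingMultiset u := fun u hu => h u (Multiset.mem_cons_of_mem hu)
    rw [Multiset.sum_cons, hM.onMultiset_add (h t (Multiset.mem_cons_self t ts))
      (isCountingMultiset_sum hts), ih hts, Multiset.map_cons, Multiset.sum_cons]

theorem onMultiset_reservoirs_le {A δ : ℝ} {s : Multiset ℝ} (K : ℕ)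
    (hs : IsCountingMultiset (A ::ₘ 1 ::ₘ s)) (hδ : 0 ≤ δ) (hδA : δ ≤ A - 1)
    (hAK : A ≤ K) :
    onMultiset M (A ::ₘ 1 ::ₘ s + pile K + pile K) ≤
      onMultiset M ((A - δ) ::ₘ (1 + δ) ::ₘ s + pile (2 * K) + Multiset.replicate 1 1) := by
  set O := Multiset.replicate K (0 : ℝ)
  have e₀ : A ::ₘ 1 ::ₘ s + pile K + pile K =
      A ::ₘ ((K : ℝ) + 1) ::ₘ (1 ::ₘ s + O + pile K) := by
    simp only [pile, ← Multiset.singleton_add]; abel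
  have e₁ : (A - δ) ::ₘ ((K : ℝ) + 1 + δ) ::ₘ (1 ::ₘ s + O + pile K) =
      ((K : ℝ) + 1) ::ₘ ((K : ℝ) + 1 + δ) ::ₘ ((A - δ) ::ₘ 1 ::ₘ s + O + O) := by
    simp only [pile, ← Multiset.singleton_add]; abel
  have e₂ : ((K : ℝ) + 1 - (K - δ)) ::ₘ ((K : ℝ) + 1 + δ + (K - δ)) ::ₘ
      ((A - δ) ::ₘ 1 ::ₘ s + O + O) =
      (A - δ) ::ₘ (1 + δ) ::ₘ s + pile (2 * K) + Multiset.replicate 1 1 := by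
    rw [show (K : ℝ) + 1 - (K - δ) = 1 + δ by ring,
      show (K : ℝ) + 1 + δ + (K - δ) = ((2 * K : ℕ) : ℝ) + 1 by push_cast; ring]
    simp only [pile, O, two_mul, Multiset.replicate_add, ← Multiset.singleton_add,
      Multiset.replicate_one]
    abel
  have hc₀ := e₀ ▸ (hs.add (isCountingMultiset_pile K)).add (isCountingMultiset_pile K)
  -- Pour `δ` from `A` onto the first reservoir, then drain the second one down to `1 + δ`.
  have h₁ := hM.onMultiset_le_move hc₀ (by linarith) hδ (by linarith)
  rw [e₁] at h₁
  have hc₁ := e₁ ▸ hc₀.cons_cons (by linarith) (by positivity) (by ring)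
  have h₂ := hM.onMultiset_le_move hc₁ (ε := K - δ) (by linarith) (by linarith) (by linarith)
  rw [e₀, ← e₂]
  exact h₁.trans h₂

theorem onMultiset_le_unspread {A δ : ℝ} {s : Multiset ℝ}
    (hs : IsCountingMultiset (A ::ₘ 1 ::ₘ s)) (hδ : 0 ≤ δ) (hδA : δ ≤ A - 1) :
    onMultiset M (A ::ₘ 1 ::ₘ s) ≤ onMultiset M ((A - δ) ::ₘ (1 + δ) ::ₘ s) := by
  set K := Multiset.card s + 2
  have hAK : A ≤ K := by have := hs.add_le_card; simp only [K]; push_cast; linarith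
  have hB := hs.cons_cons (x' := A - δ) (y' := 1 + δ) (by linarith) (by linarith) (by ring)
  have h := hM.onMultiset_reservoirs_le K hs hδ hδA hAK
  rw [hM.onMultiset_add (hs.add (isCountingMultiset_pile K)) (isCountingMultiset_pile K),
    hM.onMultiset_add hs (isCountingMultiset_pile K),
    hM.onMultiset_add (hB.add (isCountingMultiset_pile _)) (isCountingMultiset_replicate_one 1),
    hM.onMultiset_add hB (isCountingMultiset_pile _), hM.onMultiset_pile, hM.onMultiset_pile,
    hM.onMultiset_replicate_one] at h
  push_cast at h
  linarith

theorem onMultiset_cons_cons_of_one_le {a b : ℝ} {s : Multiset ℝ}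
    (hs : IsCountingMultiset (a ::ₘ b ::ₘ s)) (ha : 1 ≤ a) (hb : 1 ≤ b) :
    onMultiset M (a ::ₘ b ::ₘ s) = onMultiset M ((a + b - 1) ::ₘ 1 ::ₘ s) := by
  refine le_antisymm ?_ ?_
  · rcases le_total b a with h | h
    · rw [Multiset.cons_swap a b] at hs ⊢
      have := hM.onMultiset_le_move hs h (ε := b - 1) (by linarith) (by linarith)
      rwa [show b - (b - 1) = 1 by ring, show a + (b - 1) = a + b - 1 by ring,
        Multiset.cons_swap 1] at this
    · have := hM.onMultiset_le_move hs h (ε := a - 1) (by linarith) (by linarith)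
      rwa [show a - (a - 1) = 1 by ring, show b + (a - 1) = a + b - 1 by ring,
        Multiset.cons_swap 1] at this
  · have hs' := hs.cons_cons (x' := a + b - 1) (y' := 1) (by linarith) zero_le_one (by ring)
    have := hM.onMultiset_le_unspread hs' (δ := b - 1) (by linarith) (by linarith)
    rwa [show a + b - 1 - (b - 1) = a by ring, show 1 + (b - 1) = b by ring] at this

theorem onMultiset_cons_add_of_one_le {L : Multiset ℝ} (hL : ∀ x ∈ L, 1 ≤ x) :
    ∀ {y : ℝ} {S : Multiset ℝ}, IsCountingMultiset (y ::ₘ (L + S)) → 1 ≤ y →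
      onMultiset M (y ::ₘ (L + S)) = onMultiset M
        ((y + L.sum - Multiset.card L) ::ₘ (Multiset.replicate (Multiset.card L) 1 + S)) := by
  induction L using Multiset.induction_on with
  | empty => intro y S _ _; simp
  | cons b L ih =>
    intro y S hs hy
    have hb : 1 ≤ b := hL b (Multiset.mem_cons_self b L)
    rw [Multiset.cons_add] at hs
    have hs' := hs.cons_cons (x' := y + b - 1) (y' := 1) (by linarith) zero_le_one (by ring)
    rw [← Multiset.add_cons] at hs'
    rw [Multiset.cons_add, hM.onMultiset_cons_cons_of_one_le hs hy hb, ← Multiset.add_cons,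
      ih (fun x hx => hL x (Multiset.mem_cons_of_mem hx)) hs' (by linarith), Multiset.sum_cons,
      Multiset.card_cons, Multiset.replicate_succ, Multiset.add_cons, Multiset.cons_add]
    congr 2
    push_cast
    ring

theorem onMultiset_add_eq_of_one_le {L L' S : Multiset ℝ} (hL : ∀ x ∈ L, 1 ≤ x)
    (hL' : ∀ x ∈ L', 1 ≤ x) (hcard : Multiset.card L = Multiset.card L')
    (hs : IsCountingMultiset (L + S)) (hs' : IsCountingMultiset (L' + S)) :
    onMultiset M (L + S) = onMultiset M (L' + S) := by
  rcases Multiset.empty_or_exists_mem L with rfl | ⟨y, hy⟩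
  · rw [Multiset.card_zero, eq_comm, Multiset.card_eq_zero] at hcard
    rw [hcard]
  obtain ⟨y', hy'⟩ :=
    Multiset.card_pos_iff_exists_mem.1 (hcard ▸ Multiset.card_pos_iff_exists_mem.2 ⟨y, hy⟩)
  obtain ⟨L₀, rfl⟩ := Multiset.exists_cons_of_mem hy
  obtain ⟨L₀', rfl⟩ := Multiset.exists_cons_of_mem hy'
  have hsum : y + L₀.sum = y' + L₀'.sum := by
    have h := hs.2
    have h' := hs'.2
    simp only [Multiset.sum_add, Multiset.card_add, Multiset.sum_cons, Multiset.card_cons,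
      hcard] at h h'
    linarith
  rw [Multiset.cons_add] at hs hs' ⊢
  rw [Multiset.cons_add,
    hM.onMultiset_cons_add_of_one_le (fun x hx => hL x (Multiset.mem_cons_of_mem hx)) hs (hL y hy),
    hM.onMultiset_cons_add_of_one_le (fun x hx => hL' x (Multiset.mem_cons_of_mem hx)) hs'
      (hL' y' hy')]
  rw [Multiset.card_cons, Multiset.card_cons, Nat.add_right_cancel_iff] at hcard
  rw [hcard, hsum]

theorem onMultiset_eq_sum_genFun {s : Multiset ℝ} (hs : IsCountingMultiset s) :
    onMultiset M s = (s.map (genFun M)).sum := by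
  have hmin : ∀ x ∈ s, 0 ≤ min x 1 ∧ min x 1 ≤ 1 := fun x hx =>
    ⟨le_min (hs.1 x hx) zero_le_one, min_le_right x 1⟩
  have hpairs : ∀ t ∈ s.map fun x => ({min x 1, 2 - min x 1} : Multiset ℝ),
      IsCountingMultiset t := by
    simp only [Multiset.mem_map]
    rintro t ⟨x, hx, rfl⟩
    exact isCountingMultiset_pair (hmin x hx).1 (by linarith [(hmin x hx).2])
  have e₁ := s.add_replicate_card_eq 1
  have e₂ := s.sum_map_pair (min · 1) (2 - min · 1)
  rw [add_comm] at e₂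
  calc onMultiset M s = onMultiset M (s + Multiset.replicate (Multiset.card s) 1) := by
        rw [hM.onMultiset_add hs (isCountingMultiset_replicate_one _),
          hM.onMultiset_replicate_one, add_zero]
    _ = onMultiset M (s.map (2 - min · 1) + s.map (min · 1)) := by
      rw [e₁]
      refine hM.onMultiset_add_eq_of_one_le (by simp) ?_ (by simp)
        (e₁ ▸ hs.add (isCountingMultiset_replicate_one _))
        (e₂ ▸ isCountingMultiset_sum hpairs)
      simp only [Multiset.mem_map]
      rintro _ ⟨x, hx, rfl⟩
      linarith [(hmin x hx).2]
    _ = (s.map (genFun M)).sum := by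
      rw [← e₂, hM.onMultiset_sum hpairs, Multiset.map_map]
      rfl

theorem eq_sum_genFun {N : ℕ} {P : Fin N → ℝ} (hP : IsCountingVector P) :
    M N P = ∑ i, genFun M (P i) := by
  rw [← hM.onMultiset_map_univ hP,
    hM.onMultiset_eq_sum_genFun (isCountingMultiset_map_univ.2 hP), Multiset.map_map]
  rfl

theorem pairFun_one : pairFun M 1 = 0 := by
  rw [pairFun, show (2 : ℝ) - 1 = 1 by norm_num, ← hM.onMultiset_replicate_one 2]
  rfl

theorem pairFun_zero : pairFun M 0 = 1 := by
  have h := hM.onMultiset_pile 1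
  rw [pile, Nat.cast_one, one_add_one_eq_two] at h
  rw [pairFun, sub_zero, Multiset.pair_comm, ← h, Multiset.replicate_one]
  rfl

theorem pairFun_antitoneOn : AntitoneOn (pairFun M) (Set.Icc 0 1) := by
  intro x hx y hy hxy
  have := hM.onMultiset_le_move (isCountingMultiset_pair hy.1 (by linarith [hy.2]))
    (x := y) (y := 2 - y) (s := 0) (by linarith [hy.2]) (ε := y - x) (by linarith)
    (by linarith [hx.1])
  rwa [show y - (y - x) = x by ring, show 2 - y + (y - x) = 2 - x by ring] at this

theorem pairFun_midpoint {x y : ℝ} (hx : x ∈ Set.Icc (0 : ℝ) 1)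
    (hy : y ∈ Set.Icc (0 : ℝ) 1) (hxy : x ≤ y) :
    pairFun M ((x + y) / 2) ≤ (pairFun M x + pairFun M y) / 2 := by
  set z := (x + y) / 2 with hzdef
  have hpair : ∀ u ∈ Set.Icc (0 : ℝ) 1, IsCountingMultiset {u, 2 - u} := fun u hu =>
    isCountingMultiset_pair hu.1 (by linarith [hu.2])
  have hz : z ∈ Set.Icc (0 : ℝ) 1 := ⟨by linarith [hx.1, hy.1], by linarith [hx.2, hy.2]⟩
  have e₁ : ({z, 2 - z} : Multiset ℝ) + {z, 2 - z} = z ::ₘ z ::ₘ {2 - z, 2 - z} := by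
    simp only [Multiset.insert_eq_cons, ← Multiset.singleton_add]; abel
  have e₂ : x ::ₘ y ::ₘ ({2 - z, 2 - z} : Multiset ℝ) =
      (2 - z) ::ₘ (2 - z) ::ₘ {x, y} := by
    simp only [Multiset.insert_eq_cons, ← Multiset.singleton_add]; abel
  have e₃ : ({x, 2 - x} : Multiset ℝ) + {y, 2 - y} = (2 - x) ::ₘ (2 - y) ::ₘ {x, y} := by
    simp only [Multiset.insert_eq_cons, ← Multiset.singleton_add]; abel
  have h₀ := e₁ ▸ (hpair z hz).add (hpair z hz)
  have h₁ := e₃ ▸ (hpair x hx).add (hpair y hy)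
  have hmove := hM.onMultiset_le_move h₀ le_rfl (ε := z - x) (by linarith) (by linarith [hx.1])
  rw [show z - (z - x) = x by ring, show z + (z - x) = y by ring, e₂] at hmove
  have h₂ := e₂ ▸ h₀.cons_cons (x' := x) (y' := y) hx.1 hy.1 (by ring)
  have hbig : onMultiset M ((2 - z) ::ₘ (2 - z) ::ₘ {x, y}) =
      onMultiset M ((2 - x) ::ₘ (2 - y) ::ₘ {x, y}) := by
    rw [hM.onMultiset_cons_cons_of_one_le h₂ (by linarith [hz.2]) (by linarith [hz.2]),
      hM.onMultiset_cons_cons_of_one_le h₁ (by linarith [hx.2]) (by linarith [hy.2])]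
    congr 2
    ring
  have hsplit := hM.onMultiset_add (hpair x hx) (hpair y hy)
  have hdouble := hM.onMultiset_add (hpair z hz) (hpair z hz)
  rw [e₃] at hsplit
  rw [e₁] at hdouble
  simp only [pairFun]
  linarith

theorem pairFun_continuousOn : ContinuousOn (pairFun M) (Set.Icc 0 2) := by
  refine ((hM.2.2.1 2).comp (by fun_prop : Continuous fun x : ℝ => ![x, 2 - x]).continuousOn
    fun x hx => isCountingVector_pair hx.1 hx.2).congr fun x hx => ?_
  rw [Function.comp_apply, ← hM.onMultiset_map_univ (isCountingVector_pair hx.1 hx.2)]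
  exact congrArg (onMultiset M) (Multiset.map_univ_cons_cons x (2 - x) ![]).symm

theorem pairFun_convexOn : ConvexOn ℝ (Set.Icc 0 1) (pairFun M) := by
  refine convexOn_of_continuousOn_of_midpoint
    (hM.pairFun_continuousOn.mono (Set.Icc_subset_Icc le_rfl one_le_two)) fun x hx y hy => ?_
  rcases le_total x y with h | h
  · exact hM.pairFun_midpoint hx hy h
  · rw [add_comm x, add_comm (pairFun M x)]
    exact hM.pairFun_midpoint hy hx h

theorem isCanonicalGF_genFun : IsCanonicalGF (genFun M) := by
  have himg : (fun p : ℝ => min p 1) '' Set.Ici 0 = Set.Icc 0 1 := by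
    ext y
    refine ⟨?_, fun hy => ⟨y, hy.1, min_eq_left hy.2⟩⟩
    rintro ⟨p, hp, rfl⟩
    exact ⟨le_min hp zero_le_one, min_le_right p 1⟩
  refine ⟨?_, ?_, by simp [genFun, hM.pairFun_zero], fun p hp => by
    rw [genFun, min_eq_right hp, hM.pairFun_one]⟩
  · exact (himg ▸ hM.pairFun_convexOn).comp_concaveOn
      ((concaveOn_id (convex_Ici 0)).inf (concaveOn_const 1 (convex_Ici 0)))
      (himg ▸ hM.pairFun_antitoneOn)
  · exact hM.pairFun_continuousOn.comp (continuous_id.min continuous_const).continuousOn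
      fun p hp => ⟨le_min hp zero_le_one, (min_le_right p 1).trans one_le_two⟩

end IsCoENF

theorem coENF_characterization (M : ∀ N : ℕ, (Fin N → ℝ) → ℝ) :
    -- M is a co-ENF iff it is generated by a canonical generating function ...
    (IsCoENF M ↔ ∃ m : ℝ → ℝ, IsCanonicalGF m ∧
      ∀ (N : ℕ) (P : Fin N → ℝ), IsCountingVector P → M N P = ∑ i, m (P i)) ∧
    -- ... and such a generating function is unique
    (∀ m₁ m₂ : ℝ → ℝ,
      IsCanonicalGF m₁ →
      (∀ (N : ℕ) (P : Fin N → ℝ), IsCountingVector P → M N P = ∑ i, m₁ (P i)) →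
      IsCanonicalGF m₂ →
      (∀ (N : ℕ) (P : Fin N → ℝ), IsCountingVector P → M N P = ∑ i, m₂ (P i)) →
      ∀ p : ℝ, 0 ≤ p → m₁ p = m₂ p) := by
  refine ⟨⟨fun hM => ⟨genFun M, hM.isCanonicalGF_genFun, fun N P hP => hM.eq_sum_genFun hP⟩,
    fun ⟨m, hm, hMm⟩ => isCoENF_of_eq_sum hm hMm⟩, ?_⟩
  intro m₁ m₂ h₁ hM₁ h₂ hM₂ p hp
  exact h₁.eqOn_of_sum_eq h₂ (fun N P hP => (hM₁ N P hP).symm.trans (hM₂ N P hP)) hp
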